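/- Let (B, P) be a static isotropic (MHD) plasma equilibrium on ℝ³, let M : ℝ³ → ℝ be smooth with M(x) ≠ 0 for all x and B · grad M = 0 everywhere, and let P₁ be a real constant. Define B′ := M B, τ′ := 1 − 1/M², p⊥′ := P₁ + P + (1 − M²)|B|²/2, and p∥′ := P₁ + P − (1 − M²)|B|²/2. Then p∥′ − p⊥′ = τ′ |B′|², and (B′, p⊥′, τ′) is a static anisotropic (CGL) plasma equilibrium: (1 − τ′)(curl B′) × B′ = grad p⊥′ + τ′ grad(|B′|²/2) + (B′ · grad τ′) B′, div B′ = 0, and B′ · grad τ′ = 0 everywhere. Moreover B′ is everywhere parallel to B, so the new solution has the same set of magnetic field lines as the original one. -/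

import Mathlib

/-!
Since `B · ∇M = 0`, the vector triple product `(∇M × B) × B` collapses to `-|B|² ∇M`, so
`curl (M B) × (M B) = M² (curl B × B) - M |B|² ∇M`. After the factor `1 - τ′ = 1/M²` and the MHD
balance this is `∇P - (|B|²/M) ∇M`, which is exactly what `∇p⊥′ + τ′ ∇(M²|B|²/2)` adds up to.
Being a function of `M`, `τ′` is constant along field lines, which kills the last term of the CGL
balance, and `div (M B) = M div B + B · ∇M = 0`.
-/

open Matrix

noncomputable section

abbrev R3 : Type := Fin 3 → ℝ

/-- Partial derivative in the `i`-th coordinate direction. -/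
def pd (i : Fin 3) (f : R3 → ℝ) (x : R3) : ℝ := fderiv ℝ f x (Pi.single i 1)

/-- Gradient of a scalar field on ℝ³. -/
def grad3 (f : R3 → ℝ) (x : R3) : R3 := fun i => pd i f x

/-- Divergence of a vector field on ℝ³. -/
def div3 (B : R3 → R3) (x : R3) : ℝ := ∑ i, pd i (fun y => B y i) x

/-- Curl of a vector field on ℝ³. -/
def curl3 (B : R3 → R3) (x : R3) : R3 :=
  ![pd 1 (fun y => B y 2) x - pd 2 (fun y => B y 1) x,
    pd 2 (fun y => B y 0) x - pd 0 (fun y => B y 2) x,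
    pd 0 (fun y => B y 1) x - pd 1 (fun y => B y 0) x]

section ScalarCalculus

variable {f g : R3 → ℝ} {x : R3}

theorem pd_mul (hf : DifferentiableAt ℝ f x) (hg : DifferentiableAt ℝ g x) (i : Fin 3) :
    pd i (fun y => f y * g y) x = f x * pd i g x + g x * pd i f x := by
  simp [pd, fderiv_fun_mul hf hg]

theorem grad3_add (hf : DifferentiableAt ℝ f x) (hg : DifferentiableAt ℝ g x) :
    grad3 (fun y => f y + g y) x = grad3 f x + grad3 g x := by
  ext i; simp [grad3, pd, fderiv_fun_add hf hg]

theorem grad3_const_add (c : ℝ) : grad3 (fun y => c + f y) x = grad3 f x := by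
  ext i; simp [grad3, pd, fderiv_const_add]

theorem grad3_const_sub (c : ℝ) : grad3 (fun y => c - f y) x = -grad3 f x := by
  ext i; simp [grad3, pd, fderiv_const_sub]

theorem grad3_mul (hf : DifferentiableAt ℝ f x) (hg : DifferentiableAt ℝ g x) :
    grad3 (fun y => f y * g y) x = f x • grad3 g x + g x • grad3 f x := by
  ext i; simp [grad3, pd_mul hf hg]

theorem grad3_div_const (hf : DifferentiableAt ℝ f x) (c : ℝ) :
    grad3 (fun y => f y / c) x = c⁻¹ • grad3 f x := by
  ext i; simp [grad3, pd, div_eq_mul_inv, fderiv_mul_const hf]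

theorem grad3_comp {h : ℝ → ℝ} {h' : ℝ} (hh : HasDerivAt h h' (f x))
    (hf : DifferentiableAt ℝ f x) : grad3 (fun y => h (f y)) x = h' • grad3 f x := by
  ext i
  rw [grad3, pd, show (fun y => h (f y)) = h ∘ f from rfl,
    (hh.comp_hasFDerivAt x hf.hasFDerivAt).fderiv]
  simp [grad3, pd]

theorem dotProduct_grad3_comp_eq_zero {h : ℝ → ℝ} {v : R3} (hh : DifferentiableAt ℝ h (f x))
    (hf : DifferentiableAt ℝ f x) (hv : v ⬝ᵥ grad3 f x = 0) :
    v ⬝ᵥ grad3 (fun y => h (f y)) x = 0 := by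
  rw [grad3_comp hh.hasDerivAt hf, dotProduct_smul, hv, smul_zero]

end ScalarCalculus

section VectorCalculus

variable {f : R3 → ℝ} {B : R3 → R3} {x : R3}

theorem div3_smul (hf : DifferentiableAt ℝ f x) (hB : DifferentiableAt ℝ B x) :
    div3 (fun y => f y • B y) x = f x * div3 B x + B x ⬝ᵥ grad3 f x := by
  have hBj := differentiableAt_pi.1 hB
  simp only [div3, Pi.smul_apply, smul_eq_mul, pd_mul hf (hBj _)]
  simp only [Fin.sum_univ_three, dotProduct, grad3]
  ring

theorem curl3_smul (hf : DifferentiableAt ℝ f x) (hB : DifferentiableAt ℝ B x) :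
    curl3 (fun y => f y • B y) x = f x • curl3 B x + grad3 f x ⨯₃ B x := by
  have hBj := differentiableAt_pi.1 hB
  simp only [curl3, Pi.smul_apply, smul_eq_mul, pd_mul hf (hBj _)]
  ext i
  fin_cases i <;>
    simp only [Fin.zero_eta, Fin.mk_one, Fin.reduceFinMk, cons_val, cons_val_zero, cons_val_one,
      smul_cons, smul_eq_mul, smul_empty, cross_apply, grad3, Pi.add_apply] <;>
    ring

end VectorCalculus

theorem cgl_momentum_of_mhd {B : R3 → R3} {P M : R3 → ℝ} {x : R3} (P₁ : ℝ)
    (hB : DifferentiableAt ℝ B x) (hP : DifferentiableAt ℝ P x) (hM : DifferentiableAt ℝ M x)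
    (hmom : curl3 B x ⨯₃ B x = grad3 P x) (hM0 : M x ≠ 0) (hMline : B x ⬝ᵥ grad3 M x = 0) :
    (1 - (1 - 1 / M x ^ 2)) • curl3 (fun y => M y • B y) x ⨯₃ (M x • B x) =
      grad3 (fun y => P₁ + P y + (1 - M y ^ 2) * (B y ⬝ᵥ B y) / 2) x
        + (1 - 1 / M x ^ 2) • grad3 (fun y => (M y • B y) ⬝ᵥ (M y • B y) / 2) x := by
  have hE : DifferentiableAt ℝ (fun y => B y ⬝ᵥ B y) x := by
    have hBj := differentiableAt_pi.1 hB
    simp only [dotProduct]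
    fun_prop
  have hsq : grad3 (fun y => M y ^ 2) x = (2 * M x) • grad3 M x := by
    simpa using grad3_comp (hasDerivAt_pow 2 (M x)) hM
  have hM2 : DifferentiableAt ℝ (fun y => M y ^ 2) x := hM.pow 2
  have hgrad_p : grad3 (fun y => P₁ + P y + (1 - M y ^ 2) * (B y ⬝ᵥ B y) / 2) x =
      grad3 P x + ((1 - M x ^ 2) / 2) • grad3 (fun y => B y ⬝ᵥ B y) x
        - (M x * (B x ⬝ᵥ B x)) • grad3 M x := by
    have hK : DifferentiableAt ℝ (fun y => (1 - M y ^ 2) * (B y ⬝ᵥ B y)) x :=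
      (hM2.const_sub 1).mul hE
    simp only [add_assoc]
    rw [grad3_const_add, grad3_add hP (by fun_prop), grad3_div_const hK,
      grad3_mul (hM2.const_sub 1) hE, grad3_const_sub, hsq]
    module
  have hgrad_E' : grad3 (fun y => (M y • B y) ⬝ᵥ (M y • B y) / 2) x =
      (M x ^ 2 / 2) • grad3 (fun y => B y ⬝ᵥ B y) x + (M x * (B x ⬝ᵥ B x)) • grad3 M x := by
    have hME : DifferentiableAt ℝ (fun y => M y ^ 2 * (B y ⬝ᵥ B y)) x := hM2.mul hE
    simp only [smul_dotProduct, dotProduct_smul, smul_eq_mul, ← mul_assoc, ← sq]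
    rw [grad3_div_const hME, grad3_mul hM2 hE, hsq]
    module
  have hcross : grad3 M x ⨯₃ B x ⨯₃ B x = -(B x ⬝ᵥ B x) • grad3 M x := by
    rw [cross_cross_eq_smul_sub_smul, dotProduct_comm, hMline]
    module
  rw [hgrad_p, hgrad_E', curl3_smul hM hB]
  simp only [map_add, map_smul, LinearMap.add_apply, LinearMap.smul_apply, hmom, hcross]
  match_scalars <;> field_simp <;> ring

/-- From a static isotropic MHD equilibrium `(B, P)` and any smooth nowhere-zero
`M` constant along field lines, the fields `B′ = MB`, `τ′ = 1 − 1/M²`,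
`p⊥′ = P₁ + P + (1−M²)|B|²/2`, `p∥′ = P₁ + P − (1−M²)|B|²/2` form a static anisotropic
(CGL) equilibrium with `p∥′ − p⊥′ = τ′|B′|²`, and `B′` is everywhere parallel to `B`. -/
theorem mhd_generates_cgl_family
    (B : R3 → R3) (P : R3 → ℝ)
    (hB : ContDiff ℝ (⊤ : ℕ∞) B) (hP : ContDiff ℝ (⊤ : ℕ∞) P)
    (hmom : ∀ x, crossProduct (curl3 B x) (B x) = grad3 P x)
    (hdiv : ∀ x, div3 B x = 0)
    (M : R3 → ℝ) (hM : ContDiff ℝ (⊤ : ℕ∞) M) (hM0 : ∀ x, M x ≠ 0)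
    (hMline : ∀ x, B x ⬝ᵥ grad3 M x = 0)
    (P₁ : ℝ)
    (B' : R3 → R3) (hB' : B' = fun x => M x • B x)
    (τ' : R3 → ℝ) (hτ' : τ' = fun x => 1 - 1 / (M x) ^ 2)
    (pperp' : R3 → ℝ)
    (hpperp' : pperp' = fun x => P₁ + P x + (1 - (M x) ^ 2) * (B x ⬝ᵥ B x) / 2)
    (ppar' : R3 → ℝ)
    (hppar' : ppar' = fun x => P₁ + P x - (1 - (M x) ^ 2) * (B x ⬝ᵥ B x) / 2) :
    (∀ x, ppar' x - pperp' x = τ' x * (B' x ⬝ᵥ B' x)) ∧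
    (∀ x, (1 - τ' x) • crossProduct (curl3 B' x) (B' x) =
      grad3 pperp' x + τ' x • grad3 (fun y => (B' y ⬝ᵥ B' y) / 2) x
        + (B' x ⬝ᵥ grad3 τ' x) • B' x) ∧
    (∀ x, div3 B' x = 0) ∧ (∀ x, B' x ⬝ᵥ grad3 τ' x = 0) ∧
    (∀ x, ∃ c : ℝ, B' x = c • B x) := by
  subst hB' hτ' hpperp' hppar'
  have hBd : Differentiable ℝ B := hB.differentiable (by simp)
  have hPd : Differentiable ℝ P := hP.differentiable (by simp)
  have hMd : Differentiable ℝ M := hM.differentiable (by simp)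
  have hτline : ∀ x, (M x • B x) ⬝ᵥ grad3 (fun y => 1 - 1 / M y ^ 2) x = 0 := fun x =>
    dotProduct_grad3_comp_eq_zero (h := fun t => 1 - 1 / t ^ 2)
      (by fun_prop (disch := exact pow_ne_zero 2 (hM0 x))) (hMd x)
      (by rw [smul_dotProduct, hMline, smul_zero])
  refine ⟨fun x => ?_, fun x => ?_, fun x => ?_, hτline, fun x => ⟨M x, rfl⟩⟩
  · simp only [smul_dotProduct, dotProduct_smul, smul_eq_mul]
    field_simp [hM0 x]
    ring
  · rw [hτline, zero_smul, add_zero]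
    exact cgl_momentum_of_mhd P₁ (hBd x) (hPd x) (hMd x) (hmom x) (hM0 x) (hMline x)
  · rw [div3_smul (hMd x) (hBd x), hdiv x, hMline x, mul_zero, add_zero]
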